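/- arXiv:1503.02170 — 2 statements merged into one kernel-verified Lean document; each statement's English description precedes it below -/
import Mathlib

section
/- Let m, n be positive integers with m ≤ n and let A be an m×n matrix with integer entries. If the greatest common divisor of all m×m minors of A (the determinants of the m×m submatrices of A obtained by selecting m of the n columns) is 1, then there exists an n×m integer matrix B with A·B equal to the m×m identity matrix. -/
/-!
By Bézout, `1 = ∑ g c * det A_c` over the maximal minors `A_c` of `A`. Each
`A_c * adjugate A_c = det A_c • 1`, and `A_c` is `A` times the `0/1` matrix `P_c` picking the
columns `c`; so `B = ∑ g c • (P_c * adjugate A_c)` satisfies `A * B = 1`.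
-/

namespace Matrix

variable {m n R : Type*} [Fintype m] [DecidableEq m] [Fintype n] [DecidableEq n] [CommRing R]

theorem mul_one_submatrix_mul_adjugate (A : Matrix m n R) (c : m → n) :
    A * ((1 : Matrix n n R).submatrix id c * (A.submatrix id c).adjugate) =
      (A.submatrix id c).det • 1 := by
  have h : A * (1 : Matrix n n R).submatrix id c = A.submatrix id c := by
    simpa using mul_submatrix_one (Equiv.refl n) c A
  rw [← Matrix.mul_assoc, h, mul_adjugate]

theorem exists_mul_eq_one_of_sum_det_submatrix_mul_eq_one (A : Matrix m n R)
    (s : Finset (m → n)) (g : (m → n) → R) (h : ∑ c ∈ s, (A.submatrix id c).det * g c = 1) :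
    ∃ B : Matrix n m R, A * B = 1 := by
  refine ⟨∑ c ∈ s, g c • ((1 : Matrix n n R).submatrix id c * (A.submatrix id c).adjugate), ?_⟩
  simp only [Matrix.mul_sum, Matrix.mul_smul, mul_one_submatrix_mul_adjugate, smul_smul,
    ← Finset.sum_smul, mul_comm (g _), h, one_smul]

end Matrix

theorem stmt2_general (m n : ℕ)
    (A : Matrix (Fin m) (Fin n) ℤ)
    (hgcd : Finset.gcd
        ((Finset.univ : Finset (Fin m → Fin n)).filter
          (fun c => ∀ a b : Fin m, a < b → c a < c b))
        (fun c => (A.submatrix id c).det) = 1) :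
    ∃ B : Matrix (Fin n) (Fin m) ℤ, A * B = 1 := by
  obtain ⟨g, hg⟩ := Finset.gcd_eq_sum_mul _ fun c => (A.submatrix id c).det
  exact A.exists_mul_eq_one_of_sum_det_submatrix_mul_eq_one _ g (hg ▸ hgcd)

/-- If `m ≤ n` (with `m, n ≥ 1`) and the gcd of all `m × m` minors of the
`m × n` integer matrix `A` (determinants of submatrices obtained by selecting `m` of the
`n` columns) is `1`, then there exists an `n × m` integer matrix `B` with `A * B = 1`. -/
theorem stmt2 (m n : ℕ) (hm : 0 < m) (hn : 0 < n) (hmn : m ≤ n)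
    (A : Matrix (Fin m) (Fin n) ℤ)
    (hgcd : Finset.gcd
        ((Finset.univ : Finset (Fin m → Fin n)).filter
          (fun c => ∀ a b : Fin m, a < b → c a < c b))
        (fun c => (A.submatrix id c).det) = 1) :
    ∃ B : Matrix (Fin n) (Fin m) ℤ, A * B = 1 :=
  stmt2_general m n A hgcd
end

section
/- Let n ≥ 3. For each m ∈ {1,…,n}, let σ_m be a permutation of the set {1,…,n}∖{m} that is a single (n−1)-cycle, i.e., whose cyclic group acts transitively on {1,…,n}∖{m}. Let G be the bipartite graph on the 2n vertices {v_1^+,…,v_n^+} ∪ {v_1^−,…,v_n^−} in which v_i^+ and v_j^− are adjacent if and only if there exists m with i ≠ m and σ_m(i) = j. Suppose the vertex set of G is partitioned into two nonempty sets V_1 and V_2 such that no edge of G joins a vertex of V_1 to a vertex of V_2, and set V_i^± = V_i ∩ {v_1^±,…,v_n^±} for i = 1,2. Then |V_1^+| = |V_1^−| and |V_2^+| = |V_2^−|. -/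
/-!
A vertex set `V` that no edge of `G` leaves has as many plus as minus vertices. Let `L` and `R`
be the indices of its plus and minus vertices. For each `m`, `σ m` fixes `m` and follows edges
of `G` away from `m`, so it maps `L \ {m}` bijectively onto `R \ {m}`. Summing
`|L \ {m}| = |R \ {m}|` over all `m` gives `(n - 1) |L| = (n - 1) |R|`.
-/

open Finset

namespace Finset

variable {α β : Type*} [DecidableEq α]

theorem card_erase_eq_card_erase_of_perm {s t : Finset α} {e : Equiv.Perm α} {m : α}
    (he : e m = m) (hst : ∀ i, i ≠ m → (i ∈ s ↔ e i ∈ t)) :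
    #(s.erase m) = #(t.erase m) :=
  card_equiv e fun i => by
    rw [mem_erase, mem_erase, ← he, e.injective.ne_iff, he]
    exact and_congr_right (hst i)

theorem sum_card_erase_add_card [Fintype α] (s : Finset α) :
    ∑ a, #(s.erase a) + #s = Fintype.card α * #s := by
  have hcount : ∑ a, (if a ∈ s then 1 else 0) = #s := by simp
  calc ∑ a, #(s.erase a) + #s = ∑ a, (#(s.erase a) + if a ∈ s then 1 else 0) := by
        rw [sum_add_distrib, hcount]
    _ = ∑ _a : α, #s := sum_congr rfl fun a _ => by
        split_ifs with ha
        · exact card_erase_add_one ha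
        · rw [erase_eq_of_notMem ha, add_zero]
    _ = Fintype.card α * #s := by simp

theorem card_eq_of_forall_card_erase_eq [Fintype α] [Nontrivial α] {s t : Finset α}
    (h : ∀ a, #(s.erase a) = #(t.erase a)) : #s = #t := by
  have hs := sum_card_erase_add_card s
  have ht := sum_card_erase_add_card t
  simp only [h] at hs
  have hα := Fintype.one_lt_card (α := α)
  have hmul : (Fintype.card α - 1) * #s = (Fintype.card α - 1) * #t := by
    rw [Nat.sub_one_mul, Nat.sub_one_mul]; omega
  exact Nat.eq_of_mul_eq_mul_left (by omega) hmul

omit [DecidableEq α] in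
theorem card_filter_isLeft (u : Finset (α ⊕ β)) : #(u.filter (·.isLeft)) = #u.toLeft := by
  rw [← card_map (Function.Embedding.inl : α ↪ α ⊕ β)]
  congr 1
  ext (x | x) <;> simp

omit [DecidableEq α] in
theorem card_filter_isRight (u : Finset (α ⊕ β)) : #(u.filter (·.isRight)) = #u.toRight := by
  rw [← card_map (Function.Embedding.inr : β ↪ α ⊕ β)]
  congr 1
  ext (x | x) <;> simp

end Finset

theorem SimpleGraph.mem_iff_mem_of_adj {V : Type*} {G : SimpleGraph V} {A B : Finset V}
    (hcover : ∀ x, x ∈ A ∨ x ∈ B) (hsep : ∀ x ∈ A, ∀ y ∈ B, ¬ G.Adj x y) {x y : V}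
    (hxy : G.Adj x y) : x ∈ A ↔ y ∈ A :=
  ⟨fun hx => (hcover y).resolve_right (hsep x hx y · hxy),
    fun hy => (hcover x).resolve_right fun hx => hsep y hy x hx hxy.symm⟩

section PermGraph

variable {α : Type*}

def permGraph (σ : α → Equiv.Perm α) : SimpleGraph (α ⊕ α) :=
  SimpleGraph.fromRel fun x y => ∃ i j m, x = .inl i ∧ y = .inr j ∧ i ≠ m ∧ σ m i = j

theorem permGraph_adj_inl_inr (σ : α → Equiv.Perm α) {m i : α} (hi : i ≠ m) :
    (permGraph σ).Adj (.inl i) (.inr (σ m i)) :=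
  ⟨Sum.inl_ne_inr, .inl ⟨i, σ m i, m, rfl, rfl, hi, rfl⟩⟩

theorem card_toLeft_eq_card_toRight_of_permGraph [DecidableEq α] [Fintype α] [Nontrivial α]
    {σ : α → Equiv.Perm α} (hfix : ∀ m, σ m m = m) {V : Finset (α ⊕ α)}
    (hV : ∀ x y, (permGraph σ).Adj x y → (x ∈ V ↔ y ∈ V)) : #V.toLeft = #V.toRight :=
  card_eq_of_forall_card_erase_eq fun m =>
    card_erase_eq_card_erase_of_perm (hfix m) fun i hi => by
      simpa using hV _ _ (permGraph_adj_inl_inr σ hi)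

end PermGraph

theorem stmt5_general (n : ℕ) (hn : 3 ≤ n) (σ : Fin n → Equiv.Perm (Fin n))
    (hfix : ∀ m : Fin n, σ m m = m)
    (V₁ V₂ : Finset (Fin n ⊕ Fin n))
    (hunion : V₁ ∪ V₂ = Finset.univ)
    (hsep : ∀ x ∈ V₁, ∀ y ∈ V₂,
      ¬ (SimpleGraph.fromRel
          (fun x y : Fin n ⊕ Fin n =>
            ∃ i j m : Fin n, x = Sum.inl i ∧ y = Sum.inr j ∧ i ≠ m ∧ σ m i = j)).Adj x y) :
    (V₁.filter (fun x => x.isLeft = true)).card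
        = (V₁.filter (fun x => x.isRight = true)).card ∧
      (V₂.filter (fun x => x.isLeft = true)).card
        = (V₂.filter (fun x => x.isRight = true)).card := by
  have : Nontrivial (Fin n) := Fin.nontrivial_iff_two_le.mpr (by omega)
  have hcover (x : Fin n ⊕ Fin n) : x ∈ V₁ ∨ x ∈ V₂ := mem_union.mp (hunion ▸ mem_univ x)
  have hsep₂ : ∀ x ∈ V₂, ∀ y ∈ V₁, ¬ (permGraph σ).Adj x y :=
    fun x hx y hy hxy => hsep y hy x hx hxy.symm
  simp only [card_filter_isLeft, card_filter_isRight]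
  exact ⟨card_toLeft_eq_card_toRight_of_permGraph hfix fun _ _ =>
      SimpleGraph.mem_iff_mem_of_adj hcover hsep,
    card_toLeft_eq_card_toRight_of_permGraph hfix fun _ _ =>
      SimpleGraph.mem_iff_mem_of_adj (fun x => (hcover x).symm) hsep₂⟩

/-- With `n ≥ 3` and `σ` as in Statement 4, if the vertex set of the
bipartite graph `G` on `Fin n ⊕ Fin n` (adjacency: `inl i ~ inr j` iff `∃ m, i ≠ m ∧
σ m i = j`) is partitioned into two nonempty sets `V₁`, `V₂` with no edge of `G`
joining `V₁` to `V₂`, then the number of plus (left) vertices in `V₁` equals the number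
of minus (right) vertices in `V₁`, and similarly for `V₂`. -/
theorem stmt5 (n : ℕ) (hn : 3 ≤ n) (σ : Fin n → Equiv.Perm (Fin n))
    (hfix : ∀ m : Fin n, σ m m = m)
    (hcyc : ∀ m i j : Fin n, i ≠ m → j ≠ m → ∃ p : ℕ, ((σ m) ^ p) i = j)
    (V₁ V₂ : Finset (Fin n ⊕ Fin n))
    (hne₁ : V₁.Nonempty) (hne₂ : V₂.Nonempty)
    (hdisj : Disjoint V₁ V₂) (hunion : V₁ ∪ V₂ = Finset.univ)
    (hsep : ∀ x ∈ V₁, ∀ y ∈ V₂,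
      ¬ (SimpleGraph.fromRel
          (fun x y : Fin n ⊕ Fin n =>
            ∃ i j m : Fin n, x = Sum.inl i ∧ y = Sum.inr j ∧ i ≠ m ∧ σ m i = j)).Adj x y) :
    (V₁.filter (fun x => x.isLeft = true)).card
        = (V₁.filter (fun x => x.isRight = true)).card ∧
      (V₂.filter (fun x => x.isLeft = true)).card
        = (V₂.filter (fun x => x.isRight = true)).card :=
  stmt5_general n hn σ hfix V₁ V₂ hunion hsep
end
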